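/- (Logarithmic Sobolev inequality on the two-point space.) Let 0 < p < 1, q = 1 − p, and let μ_p be the probability measure on {−1, +1} with μ_p({+1}) = p and μ_p({−1}) = q. For every function f : {−1, +1} → ℝ, Ent_{μ_p}(f²) ≤ (1/ρ) · p q · (f(+1) − f(−1))², where ρ = (p − q)/(log p − log q) (with ρ = 1/2 when p = 1/2). -/

import Mathlib

open MeasureTheory

/-- The entropy `Ent_μ(f) = ∫ f log f dμ − (∫ f dμ) log(∫ f dμ)` (real-valued). -/
noncomputable def entR {Ω : Type*} [MeasurableSpace Ω] (μ : Measure Ω) (f : Ω → ℝ) : ℝ :=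
  (∫ x, f x * Real.log (f x) ∂μ) - (∫ x, f x ∂μ) * Real.log (∫ x, f x ∂μ)

/-!
Write `c = 1/ρ`, so that `c (p - q) = log p - log q`; the `artanh` series of `log (p / q)` gives
`c ≥ 2`. Both sides are homogeneous of degree two in `f`, symmetric under
`(p, f(+1)) ↔ (q, f(-1))`, and replacing `f` by `|f|` only lowers the right side, so we may take
`q ≤ p`, `f(-1) = 1` and `f(+1) = x ≥ 0` (the case `f(-1) = 0` reduces to `x = 0` through
`c (p - q) = log p - log q`). The deficit `G x = c p q (x - 1)² - Ent(x², 1)` vanishes together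
with `G'` at `x = q/p` and at `x = 1`, where `G''` equals `2 p² (c - 2)` and `2 p q (c - 2)`, and
`G'''` has the sign of `p x² - q`. So `G'' ≥ 0` on `(0, q/p]` and on `[1, ∞)`, and `G` grows away
from its zeros there. On `[q/p, 1]`, `G'` vanishes at both ends and cannot turn from negative to
positive, since by the mean value theorem `G''` would then be negative, positive and negative
again, while it first decreases and then increases; hence `G ≥ min (G (q/p)) (G 1) = 0`.
-/

open Real Set

lemma nonpos_of_neg_of_deriv_antitoneOn_monotoneOn {P S : ℝ → ℝ} {r s t : ℝ}
    (hPc : ContinuousOn P (Icc r t)) (hP' : ∀ x ∈ Ioo r t, HasDerivAt P (S x) x)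
    (hS₁ : AntitoneOn S (Icc r s)) (hS₂ : MonotoneOn S (Icc s t)) (hr : P r = 0) (ht : P t = 0)
    {y z : ℝ} (hy : r ≤ y) (hyz : y ≤ z) (hz : z ≤ t) (hPy : P y < 0) : P z ≤ 0 := by
  by_contra! hPz
  have slope : ∀ a b, r ≤ a → a < b → b ≤ t → ∃ x ∈ Ioo a b, S x = (P b - P a) / (b - a) :=
    fun a b ha hab hb => exists_hasDerivAt_eq_slope P S hab (hPc.mono (Icc_subset_Icc ha hb))
      fun x hx => hP' x ⟨ha.trans_lt hx.1, hx.2.trans_le hb⟩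
  have hry : r < y := hy.lt_of_ne (by rintro rfl; linarith)
  have hyz' : y < z := hyz.lt_of_ne (by rintro rfl; linarith)
  have hzt : z < t := hz.lt_of_ne (by rintro rfl; linarith)
  obtain ⟨w, hw, hSw⟩ := slope r y le_rfl hry (hyz.trans hz)
  obtain ⟨u, hu, hSu⟩ := slope y z hy hyz' hz
  obtain ⟨v, hv, hSv⟩ := slope z t (hy.trans hyz) hzt le_rfl
  have hw0 : S w < 0 := by rw [hSw, hr]; exact div_neg_of_neg_of_pos (by linarith) (by linarith)
  have hu0 : 0 < S u := by rw [hSu]; exact div_pos (by linarith) (by linarith)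
  have hv0 : S v < 0 := by rw [hSv, ht]; exact div_neg_of_neg_of_pos (by linarith) (by linarith)
  rcases le_or_gt u s with hus | hsu
  · have := hS₁ ⟨hw.1.le, by linarith [hw.2, hu.1]⟩ ⟨by linarith [hw.1, hw.2, hu.1], hus⟩
      (by linarith [hw.2, hu.1])
    linarith
  · have := hS₂ ⟨hsu.le, by linarith [hu.2, hv.1]⟩ ⟨by linarith [hu.2, hv.1], hv.2.le⟩
      (by linarith [hu.2, hv.1])
    linarith

lemma min_le_of_deriv_antitoneOn_monotoneOn {G P S : ℝ → ℝ} {r s t : ℝ}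
    (hGc : ContinuousOn G (Icc r t)) (hG' : ∀ x ∈ Ioo r t, HasDerivAt G (P x) x)
    (hPc : ContinuousOn P (Icc r t)) (hP' : ∀ x ∈ Ioo r t, HasDerivAt P (S x) x)
    (hS₁ : AntitoneOn S (Icc r s)) (hS₂ : MonotoneOn S (Icc s t)) (hr : P r = 0) (ht : P t = 0)
    {x : ℝ} (hx : x ∈ Icc r t) : min (G r) (G t) ≤ G x := by
  by_cases h : ∃ y ∈ Ioo r x, P y < 0
  · obtain ⟨y, hy, hPy⟩ := h
    have hanti : AntitoneOn G (Icc x t) := by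
      refine antitoneOn_of_hasDerivWithinAt_nonpos (f' := P) (convex_Icc x t)
        (hGc.mono (Icc_subset_Icc hx.1 le_rfl)) (fun z hz => ?_) fun z hz => ?_
      all_goals rw [interior_Icc] at hz
      · exact (hG' z ⟨hx.1.trans_lt hz.1, hz.2⟩).hasDerivWithinAt
      · exact nonpos_of_neg_of_deriv_antitoneOn_monotoneOn hPc hP' hS₁ hS₂ hr ht hy.1.le
          (by linarith [hy.2, hz.1]) hz.2.le hPy
    exact min_le_of_right_le (hanti ⟨le_rfl, hx.2⟩ ⟨hx.2, le_rfl⟩ hx.2)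
  · push Not at h
    have hmono : MonotoneOn G (Icc r x) := by
      refine monotoneOn_of_hasDerivWithinAt_nonneg (f' := P) (convex_Icc r x)
        (hGc.mono (Icc_subset_Icc le_rfl hx.2)) (fun z hz => ?_) fun z hz => ?_
      all_goals rw [interior_Icc] at hz
      · exact (hG' z ⟨hz.1, hz.2.trans_le hx.2⟩).hasDerivWithinAt
      · exact h z hz
    exact min_le_of_left_le (hmono ⟨le_rfl, hx.1⟩ ⟨hx.1, le_rfl⟩ hx.1)

lemma two_le_log_sub_log_div {p q : ℝ} (hp : 0 < p) (hq : 0 < q) (hpq : p + q = 1)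
    (hne : p ≠ q) : 2 ≤ (log p - log q) / (p - q) := by
  set x := p - q
  have hx : |x| < 1 := by rw [abs_lt]; constructor <;> linarith
  have hx0 : x ≠ 0 := sub_ne_zero.2 hne
  have hsum := (hasSum_log_sub_log_of_abs_lt_one hx).div_const x
  rw [show 1 + x = 2 * p by linarith, show 1 - x = 2 * q by linarith, log_mul two_ne_zero hp.ne',
    log_mul two_ne_zero hq.ne', add_sub_add_left_eq_sub] at hsum
  have hterm (k : ℕ) :
      2 * (1 / (2 * k + 1)) * x ^ (2 * k + 1) / x = 2 / (2 * k + 1) * (x ^ 2) ^ k := by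
    field_simp
    rw [← pow_mul, pow_succ, mul_comm]
  simp only [hterm] at hsum
  simpa using le_hasSum hsum 0 fun k _ => by positivity

noncomputable def twoPointEnt (p q a b : ℝ) : ℝ :=
  p * (a * log a) + q * (b * log b) - (p * a + q * b) * log (p * a + q * b)

lemma twoPointEnt_comm (p q a b : ℝ) : twoPointEnt p q a b = twoPointEnt q p b a := by
  unfold twoPointEnt
  ring_nf

lemma mul_mul_log_mul (t a : ℝ) : t * a * log (t * a) = a * (t * log t) + t * (a * log a) := by
  have h := negMulLog_mul t a
  simp only [negMulLog] at h
  linarith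

lemma twoPointEnt_mul_mul (p q t a b : ℝ) :
    twoPointEnt p q (t * a) (t * b) = t * twoPointEnt p q a b := by
  have h : p * (t * a) + q * (t * b) = t * (p * a + q * b) := by ring
  simp only [twoPointEnt, h, mul_mul_log_mul]
  ring

noncomputable def lsiDeficit (p q c x : ℝ) : ℝ :=
  c * p * q * (x - 1) ^ 2 - twoPointEnt p q (x ^ 2) 1

noncomputable def lsiDeficit' (p q c x : ℝ) : ℝ :=
  2 * c * p * q * (x - 1) - 2 * p * x * log (x ^ 2) + 2 * p * x * log (p * x ^ 2 + q)

noncomputable def lsiDeficit'' (p q c x : ℝ) : ℝ :=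
  2 * c * p * q - 2 * p * log (x ^ 2) + 2 * p * log (p * x ^ 2 + q) - 4 * p * q / (p * x ^ 2 + q)

noncomputable def lsiDeficit''' (p q x : ℝ) : ℝ :=
  4 * p * q * (p * x ^ 2 - q) / (x * (p * x ^ 2 + q) ^ 2)

section Deficit

variable {p q c x : ℝ}

lemma lsiDeficit_eq : lsiDeficit p q c = fun x => c * p * q * (x - 1) ^ 2
    - p * (x ^ 2 * log (x ^ 2)) + (p * x ^ 2 + q) * log (p * x ^ 2 + q) := by
  ext x
  simp only [lsiDeficit, twoPointEnt, log_one, mul_zero, mul_one, add_zero]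
  ring

lemma continuous_lsiDeficit : Continuous (lsiDeficit p q c) := by
  rw [lsiDeficit_eq]
  fun_prop

lemma hasDerivAt_lsiDeficit (hp : 0 < p) (hq : 0 < q) (hx : x ≠ 0) :
    HasDerivAt (lsiDeficit p q c) (lsiDeficit' p q c x) x := by
  rw [lsiDeficit_eq]
  have hsq : HasDerivAt (fun y : ℝ => y ^ 2) (2 * x) x := by simpa using hasDerivAt_pow 2 x
  have hD := (hsq.const_mul p).add_const q
  have h1 := hsq.mul (hsq.log (pow_ne_zero 2 hx))
  have h2 := hD.mul (hD.log (by positivity))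
  refine ((((hasDerivAt_id' x).sub_const 1).pow 2 |>.const_mul (c * p * q)).sub (h1.const_mul p)
    |>.add h2).congr_deriv ?_
  simp only [lsiDeficit']
  field_simp
  ring

lemma hasDerivAt_lsiDeficit' (hp : 0 < p) (hq : 0 < q) (hx : x ≠ 0) :
    HasDerivAt (lsiDeficit' p q c) (lsiDeficit'' p q c x) x := by
  have hsq : HasDerivAt (fun y : ℝ => y ^ 2) (2 * x) x := by simpa using hasDerivAt_pow 2 x
  have h1 := hsq.log (pow_ne_zero 2 hx)
  have h2 := ((hsq.const_mul p).add_const q).log (by positivity)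
  have hpx := (hasDerivAt_id' x).const_mul (2 * p)
  refine ((((hasDerivAt_id' x).sub_const 1).const_mul (2 * c * p * q)).sub (hpx.mul h1)
    |>.add (hpx.mul h2)).congr_deriv ?_
  simp only [lsiDeficit'']
  field_simp
  ring

lemma hasDerivAt_lsiDeficit'' (hp : 0 < p) (hq : 0 < q) (hx : x ≠ 0) :
    HasDerivAt (lsiDeficit'' p q c) (lsiDeficit''' p q x) x := by
  have hsq : HasDerivAt (fun y : ℝ => y ^ 2) (2 * x) x := by simpa using hasDerivAt_pow 2 x
  have hD : p * x ^ 2 + q ≠ 0 := by positivity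
  have h1 := hsq.log (pow_ne_zero 2 hx)
  have h2 := ((hsq.const_mul p).add_const q).log hD
  have h3 := ((hsq.const_mul p).add_const q).inv hD
  refine ((((h1.const_mul (2 * p)).const_sub (2 * c * p * q)).add (h2.const_mul (2 * p))).sub
    (h3.const_mul (4 * p * q))).congr_deriv ?_
  simp only [lsiDeficit''']
  field_simp
  ring

lemma continuousOn_lsiDeficit' (hp : 0 < p) (hq : 0 < q) :
    ContinuousOn (lsiDeficit' p q c) (Ioi 0) := fun _ hx =>
  (hasDerivAt_lsiDeficit' hp hq (ne_of_gt hx)).continuousAt.continuousWithinAt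

lemma continuousOn_lsiDeficit'' (hp : 0 < p) (hq : 0 < q) :
    ContinuousOn (lsiDeficit'' p q c) (Ioi 0) := fun _ hx =>
  (hasDerivAt_lsiDeficit'' hp hq (ne_of_gt hx)).continuousAt.continuousWithinAt

lemma lsiDeficit'''_nonpos (hp : 0 < p) (hq : 0 < q) (hx : 0 < x) (h : p * x ^ 2 ≤ q) :
    lsiDeficit''' p q x ≤ 0 :=
  div_nonpos_of_nonpos_of_nonneg (mul_nonpos_of_nonneg_of_nonpos (by positivity)
    (sub_nonpos.2 h)) (by positivity)

lemma lsiDeficit'''_nonneg (hp : 0 < p) (hq : 0 < q) (hx : 0 < x) (h : q ≤ p * x ^ 2) :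
    0 ≤ lsiDeficit''' p q x :=
  div_nonneg (mul_nonneg (by positivity) (sub_nonneg.2 h)) (by positivity)

lemma antitoneOn_lsiDeficit'' (hp : 0 < p) (hq : 0 < q) :
    AntitoneOn (lsiDeficit'' p q c) (Ioc 0 √(q / p)) := by
  refine antitoneOn_of_hasDerivWithinAt_nonpos (f' := lsiDeficit''' p q) (convex_Ioc _ _)
    ((continuousOn_lsiDeficit'' hp hq).mono Ioc_subset_Ioi_self) (fun x hx => ?_) fun x hx => ?_
  all_goals rw [interior_Ioc] at hx
  · exact (hasDerivAt_lsiDeficit'' hp hq (ne_of_gt hx.1)).hasDerivWithinAt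
  · refine lsiDeficit'''_nonpos hp hq hx.1 ?_
    rw [← le_div_iff₀' hp, ← le_sqrt hx.1.le (by positivity)]
    exact hx.2.le

lemma monotoneOn_lsiDeficit'' (hp : 0 < p) (hq : 0 < q) :
    MonotoneOn (lsiDeficit'' p q c) (Ici √(q / p)) := by
  have hpos : ∀ x ∈ Ici √(q / p), 0 < x := fun x hx => (sqrt_pos.2 (by positivity)).trans_le hx
  refine monotoneOn_of_hasDerivWithinAt_nonneg (f' := lsiDeficit''' p q) (convex_Ici _)
    ((continuousOn_lsiDeficit'' hp hq).mono hpos) (fun x hx => ?_) fun x hx => ?_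
  all_goals rw [interior_Ici] at hx
  · exact (hasDerivAt_lsiDeficit'' hp hq (hpos x (Ioi_subset_Ici_self hx)).ne').hasDerivWithinAt
  · refine lsiDeficit'''_nonneg hp hq (hpos x (Ioi_subset_Ici_self hx)) ?_
    rw [← div_le_iff₀' hp, ← sqrt_le_left (hpos x (Ioi_subset_Ici_self hx)).le]
    exact hx.le

lemma lsiDeficit_zero : lsiDeficit p q c 0 = c * p * q + q * log q := by
  simp [lsiDeficit, twoPointEnt]

lemma lsiDeficit_one (hpq : p + q = 1) : lsiDeficit p q c 1 = 0 := by
  simp [lsiDeficit, twoPointEnt, hpq]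

lemma lsiDeficit'_one (hpq : p + q = 1) : lsiDeficit' p q c 1 = 0 := by
  simp [lsiDeficit', hpq]

lemma lsiDeficit''_one (hpq : p + q = 1) : lsiDeficit'' p q c 1 = 2 * p * q * (c - 2) := by
  simp only [lsiDeficit'', one_pow, mul_one, hpq, log_one]
  ring

lemma log_div_eq_neg_mul_sub (hp : 0 < p) (hq : 0 < q) (hc : c * (p - q) = log p - log q) :
    log (q / p) = -(c * (p - q)) := by
  rw [log_div hq.ne' hp.ne', hc]
  ring

lemma mul_div_sq_add_eq_div (hp : 0 < p) (hpq : p + q = 1) : p * (q / p) ^ 2 + q = q / p := by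
  field_simp
  linear_combination q * hpq

lemma lsiDeficit_div (hp : 0 < p) (hq : 0 < q) (hpq : p + q = 1)
    (hc : c * (p - q) = log p - log q) : lsiDeficit p q c (q / p) = 0 := by
  rw [lsiDeficit_eq]
  dsimp only
  rw [mul_div_sq_add_eq_div hp hpq, log_pow, log_div_eq_neg_mul_sub hp hq hc]
  obtain rfl : q = 1 - p := by linarith
  field_simp
  ring

lemma lsiDeficit'_div (hp : 0 < p) (hq : 0 < q) (hpq : p + q = 1)
    (hc : c * (p - q) = log p - log q) : lsiDeficit' p q c (q / p) = 0 := by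
  rw [lsiDeficit', mul_div_sq_add_eq_div hp hpq, log_pow, log_div_eq_neg_mul_sub hp hq hc]
  obtain rfl : q = 1 - p := by linarith
  field_simp
  ring

lemma lsiDeficit''_div (hp : 0 < p) (hq : 0 < q) (hpq : p + q = 1)
    (hc : c * (p - q) = log p - log q) : lsiDeficit'' p q c (q / p) = 2 * p ^ 2 * (c - 2) := by
  rw [lsiDeficit'', mul_div_sq_add_eq_div hp hpq, log_pow, log_div_eq_neg_mul_sub hp hq hc]
  obtain rfl : q = 1 - p := by linarith
  field_simp
  ring

lemma lsiDeficit_nonneg_of_le_div (hp : 0 < p) (hq : 0 < q) (hpq : p + q = 1) (hqp : q ≤ p)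
    (hc : c * (p - q) = log p - log q) (hc2 : 2 ≤ c) (hx₀ : 0 ≤ x) (hx : x ≤ q / p) :
    0 ≤ lsiDeficit p q c x := by
  have hr : 0 < q / p := by positivity
  have hrs : q / p ≤ √(q / p) := le_sqrt_self_iff.2 ((div_le_one hp).2 hqp)
  have hS : ∀ y ∈ Ioc 0 (q / p), 0 ≤ lsiDeficit'' p q c y := fun y hy => by
    have := antitoneOn_lsiDeficit'' (c := c) hp hq ⟨hy.1, hy.2.trans hrs⟩ ⟨hr, hrs⟩ hy.2
    rw [lsiDeficit''_div hp hq hpq hc] at this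
    nlinarith
  have hP : MonotoneOn (lsiDeficit' p q c) (Ioc 0 (q / p)) := by
    refine monotoneOn_of_hasDerivWithinAt_nonneg (f' := lsiDeficit'' p q c) (convex_Ioc _ _)
      ((continuousOn_lsiDeficit' hp hq).mono Ioc_subset_Ioi_self) (fun y hy => ?_) fun y hy => ?_
    all_goals rw [interior_Ioc] at hy
    · exact (hasDerivAt_lsiDeficit' hp hq (ne_of_gt hy.1)).hasDerivWithinAt
    · exact hS y (Ioo_subset_Ioc_self hy)
  have hG : AntitoneOn (lsiDeficit p q c) (Icc 0 (q / p)) := by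
    refine antitoneOn_of_hasDerivWithinAt_nonpos (f' := lsiDeficit' p q c) (convex_Icc _ _)
      continuous_lsiDeficit.continuousOn (fun y hy => ?_) fun y hy => ?_
    all_goals rw [interior_Icc] at hy
    · exact (hasDerivAt_lsiDeficit hp hq (ne_of_gt hy.1)).hasDerivWithinAt
    · simpa [lsiDeficit'_div hp hq hpq hc] using hP (Ioo_subset_Ioc_self hy) ⟨hr, le_rfl⟩ hy.2.le
  simpa [lsiDeficit_div hp hq hpq hc] using hG ⟨hx₀, hx⟩ ⟨hr.le, le_rfl⟩ hx

lemma lsiDeficit_nonneg_of_one_le (hp : 0 < p) (hq : 0 < q) (hpq : p + q = 1) (hqp : q ≤ p)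
    (hc2 : 2 ≤ c) (hx : 1 ≤ x) : 0 ≤ lsiDeficit p q c x := by
  have hs1 : √(q / p) ≤ 1 := sqrt_le_one.2 ((div_le_one hp).2 hqp)
  have hpos : ∀ y ∈ Ici (1 : ℝ), 0 < y := fun y hy => one_pos.trans_le hy
  have hS : ∀ y ∈ Ici (1 : ℝ), 0 ≤ lsiDeficit'' p q c y := fun y hy => by
    have := monotoneOn_lsiDeficit'' (c := c) hp hq hs1 (hs1.trans hy) hy
    rw [lsiDeficit''_one hpq] at this
    nlinarith [mul_pos hp hq]
  have hP : MonotoneOn (lsiDeficit' p q c) (Ici 1) := by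
    refine monotoneOn_of_hasDerivWithinAt_nonneg (f' := lsiDeficit'' p q c) (convex_Ici _)
      ((continuousOn_lsiDeficit' hp hq).mono hpos) (fun y hy => ?_) fun y hy => ?_
    all_goals rw [interior_Ici] at hy
    · exact (hasDerivAt_lsiDeficit' hp hq (hpos y (Ioi_subset_Ici_self hy)).ne').hasDerivWithinAt
    · exact hS y (Ioi_subset_Ici_self hy)
  have hG : MonotoneOn (lsiDeficit p q c) (Ici 1) := by
    refine monotoneOn_of_hasDerivWithinAt_nonneg (f' := lsiDeficit' p q c) (convex_Ici _)
      continuous_lsiDeficit.continuousOn (fun y hy => ?_) fun y hy => ?_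
    all_goals rw [interior_Ici] at hy
    · exact (hasDerivAt_lsiDeficit hp hq (hpos y (Ioi_subset_Ici_self hy)).ne').hasDerivWithinAt
    · simpa [lsiDeficit'_one hpq] using hP (mem_Ici.2 le_rfl) (Ioi_subset_Ici_self hy) hy.le
  simpa [lsiDeficit_one hpq] using hG (mem_Ici.2 le_rfl) hx hx

lemma lsiDeficit_nonneg_of_mem_Icc (hp : 0 < p) (hq : 0 < q) (hpq : p + q = 1)
    (hc : c * (p - q) = log p - log q) (hx : x ∈ Icc (q / p) 1) : 0 ≤ lsiDeficit p q c x := by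
  have hr : 0 < q / p := by positivity
  have hne : ∀ y ∈ Ioo (q / p) 1, y ≠ 0 := fun y hy => (hr.trans hy.1).ne'
  have := min_le_of_deriv_antitoneOn_monotoneOn continuous_lsiDeficit.continuousOn
    (fun y hy => hasDerivAt_lsiDeficit hp hq (hne y hy))
    ((continuousOn_lsiDeficit' hp hq).mono fun y hy => hr.trans_le hy.1)
    (fun y hy => hasDerivAt_lsiDeficit' hp hq (hne y hy))
    ((antitoneOn_lsiDeficit'' hp hq).mono fun y hy => ⟨hr.trans_le hy.1, hy.2⟩)
    ((monotoneOn_lsiDeficit'' hp hq).mono fun y hy => hy.1)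
    (lsiDeficit'_div hp hq hpq hc) (lsiDeficit'_one hpq) hx
  simpa [lsiDeficit_div hp hq hpq hc, lsiDeficit_one hpq] using this

lemma lsiDeficit_nonneg (hp : 0 < p) (hq : 0 < q) (hpq : p + q = 1) (hqp : q ≤ p)
    (hc : c * (p - q) = log p - log q) (hc2 : 2 ≤ c) (hx : 0 ≤ x) : 0 ≤ lsiDeficit p q c x := by
  rcases le_total x (q / p) with hxr | hrx
  · exact lsiDeficit_nonneg_of_le_div hp hq hpq hqp hc hc2 hx hxr
  rcases le_total x 1 with hx1 | h1x
  · exact lsiDeficit_nonneg_of_mem_Icc hp hq hpq hc ⟨hrx, hx1⟩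
  · exact lsiDeficit_nonneg_of_one_le hp hq hpq hqp hc2 h1x

lemma twoPointEnt_one_zero_le (hp : 0 < p) (hq : 0 < q) (hpq : p + q = 1) (hqp : q ≤ p)
    (hc : c * (p - q) = log p - log q) (hc2 : 2 ≤ c) : twoPointEnt p q 1 0 ≤ c * p * q := by
  have h0 := lsiDeficit_nonneg hp hq hpq hqp hc hc2 le_rfl
  rw [lsiDeficit_zero] at h0
  have h1 : 0 ≤ c * p + log q := nonneg_of_mul_nonneg_right (by linarith) hq
  have h2 : twoPointEnt p q 1 0 = -(p * log p) := by simp [twoPointEnt]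
  rw [h2]
  linear_combination p * h1 + p * hc

lemma twoPointEnt_sq_le_of_nonneg (hp : 0 < p) (hq : 0 < q) (hpq : p + q = 1) (hqp : q ≤ p)
    (hc : c * (p - q) = log p - log q) (hc2 : 2 ≤ c) {a b : ℝ} (ha : 0 ≤ a) (hb : 0 ≤ b) :
    twoPointEnt p q (a ^ 2) (b ^ 2) ≤ c * p * q * (a - b) ^ 2 := by
  rcases hb.eq_or_lt with rfl | hb
  · have h := twoPointEnt_mul_mul p q (a ^ 2) 1 0
    rw [mul_one, mul_zero] at h
    rw [zero_pow two_ne_zero, h, sub_zero]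
    nlinarith [twoPointEnt_one_zero_le hp hq hpq hqp hc hc2, sq_nonneg a]
  · have h := twoPointEnt_mul_mul p q (b ^ 2) ((a / b) ^ 2) 1
    rw [mul_one, ← mul_pow, mul_div_cancel₀ _ hb.ne'] at h
    have hG := lsiDeficit_nonneg hp hq hpq hqp hc hc2 (div_nonneg ha hb.le)
    rw [lsiDeficit, sub_nonneg] at hG
    calc twoPointEnt p q (a ^ 2) (b ^ 2) = b ^ 2 * twoPointEnt p q ((a / b) ^ 2) 1 := h
      _ ≤ b ^ 2 * (c * p * q * (a / b - 1) ^ 2) := by gcongr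
      _ = c * p * q * (a - b) ^ 2 := by field_simp

lemma twoPointEnt_sq_le (hp : 0 < p) (hq : 0 < q) (hpq : p + q = 1)
    (hc : c * (p - q) = log p - log q) (hc2 : 2 ≤ c) (a b : ℝ) :
    twoPointEnt p q (a ^ 2) (b ^ 2) ≤ c * p * q * (a - b) ^ 2 := by
  wlog hqp : q ≤ p generalizing p q a b
  · rw [twoPointEnt_comm]
    have := this hq hp (by linarith) (by linarith) b a (by linarith)
    linarith [show c * q * p * (b - a) ^ 2 = c * p * q * (a - b) ^ 2 by ring]
  calc twoPointEnt p q (a ^ 2) (b ^ 2) = twoPointEnt p q (|a| ^ 2) (|b| ^ 2) := by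
        simp only [sq_abs]
    _ ≤ c * p * q * (|a| - |b|) ^ 2 :=
        twoPointEnt_sq_le_of_nonneg hp hq hpq hqp hc hc2 (abs_nonneg a) (abs_nonneg b)
    _ ≤ c * p * q * (a - b) ^ 2 :=
        mul_le_mul_of_nonneg_left (sq_le_sq.2 (abs_abs_sub_abs_le_abs_sub a b)) (by positivity)

end Deficit

lemma integral_bool_eq {μ : Measure Bool} [IsProbabilityMeasure μ] {p : ℝ} (hp : 0 ≤ p)
    (hμ : μ {true} = ENNReal.ofReal p) (g : Bool → ℝ) :
    ∫ x, g x ∂μ = p * g true + (1 - p) * g false := by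
  have htrue : μ.real {true} = p := by simp [Measure.real, hμ, hp]
  have hfalse : μ.real {false} = 1 - p := by
    rw [← Bool.not_true, ← Bool.compl_singleton,
      probReal_compl_eq_one_sub (measurableSet_singleton _), htrue]
  rw [integral_fintype .of_finite, Fintype.sum_bool, htrue, hfalse, smul_eq_mul, smul_eq_mul]

lemma entR_bool_eq_twoPointEnt {μ : Measure Bool} [IsProbabilityMeasure μ] {p : ℝ} (hp : 0 ≤ p)
    (hμ : μ {true} = ENNReal.ofReal p) (f : Bool → ℝ) :
    entR μ f = twoPointEnt p (1 - p) (f true) (f false) := by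
  simp only [entR, twoPointEnt, integral_bool_eq hp hμ]

/-- `{−1, +1}` is modelled by `Bool`, with `true ↔ +1`. -/
theorem two_point_logSobolev (p : ℝ) (hp0 : 0 < p) (hp1 : p < 1)
    (μ : Measure Bool) [IsProbabilityMeasure μ] (hμ : μ {true} = ENNReal.ofReal p)
    (f : Bool → ℝ) :
    entR μ (fun x => (f x) ^ 2) ≤
      (1 / (if p = 1 / 2 then 1 / 2
            else (p - (1 - p)) / (Real.log p - Real.log (1 - p)))) *
        (p * (1 - p)) * (f true - f false) ^ 2 := by
  have hq : 0 < 1 - p := by linarith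
  set c := 1 / (if p = 1 / 2 then 1 / 2 else (p - (1 - p)) / (log p - log (1 - p))) with hc_def
  obtain ⟨hc, hc2⟩ : c * (p - (1 - p)) = log p - log (1 - p) ∧ 2 ≤ c := by
    rw [hc_def]
    split_ifs with hhalf
    · subst hhalf
      norm_num
    · have hne : p ≠ 1 - p := fun h => hhalf (by linarith)
      rw [one_div_div]
      exact ⟨div_mul_cancel₀ _ (sub_ne_zero.2 hne), two_le_log_sub_log_div hp0 hq (by ring) hne⟩
  rw [entR_bool_eq_twoPointEnt hp0.le hμ, ← mul_assoc]
  exact twoPointEnt_sq_le hp0 hq (by ring) hc hc2 (f true) (f false)
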